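/- arXiv:1601.04572 — 3 statements merged into one kernel-verified Lean document; each statement's English description precedes it below -/
import Mathlib

section
/- Let (η, ω) be an α-cosymplectic structure on a (2n+1)-dimensional Lie algebra g, ξ its Reeb vector, h := ker η, Ω := ω|_{h×h}, and D := ad_ξ|_h. Then D + α·Id is an infinitesimal symplectic transformation of (h, Ω), i.e., Ω(Dx + αx, y) = Ω(Dy + αy, x) for all x, y ∈ h. -/
/-- For an `α`-cosymplectic Lie algebra `(g, η, ω)` with Reeb vector `ξ`,
the endomorphism `D + α·Id` of `h := ker η`, where `D = ad_ξ|_h`, is an infinitesimal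
symplectic transformation of `(h, Ω := ω|_h)`: `Ω(Dx + αx, y) = Ω(Dy + αy, x)`. -/
theorem stmt5 {g : Type*} [LieRing g] [LieAlgebra ℝ g] {n : ℕ}
    (hdim : Module.finrank ℝ g = 2 * n + 1) (α : ℝ)
    (η : g →ₗ[ℝ] ℝ) (ω : g →ₗ[ℝ] g →ₗ[ℝ] ℝ)
    (hωalt : ∀ x, ω x x = 0)
    (hvol : ∀ x, η x = 0 → (∀ y, η y = 0 → ω x y = 0) → x = 0)
    (hdη : ∀ x y : g, η ⁅x, y⁆ = 0)
    (hdω : ∀ x y z : g, -ω ⁅x, y⁆ z - ω ⁅y, z⁆ x - ω ⁅z, x⁆ y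
      = 2 * α * (η x * ω y z + η y * ω z x + η z * ω x y))
    (ξ : g) (hξη : η ξ = 1) (hξω : ω ξ = 0) :
    ∀ x y : g, η x = 0 → η y = 0 →
      ω (⁅ξ, x⁆ + α • x) y = ω (⁅ξ, y⁆ + α • y) x := by
  have hskew : ∀ a b : g, ω a b = -ω b a := by
    intro a b
    have h := hωalt (a + b)
    simp only [map_add, LinearMap.add_apply, hωalt] at h
    linarith
  intro x y hx hy
  have key := hdω ξ x y
  have h1 : ω ⁅x, y⁆ ξ = 0 := by rw [hskew, hξω]; simp
  have hb : ⁅y, ξ⁆ = -⁅ξ, y⁆ := by rw [lie_skew]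
  have h2 : ω ⁅y, ξ⁆ x = -ω ⁅ξ, y⁆ x := by
    rw [hb, map_neg, LinearMap.neg_apply]
  have hωξ : ∀ z, ω ξ z = 0 := fun z => by rw [hξω]; simp
  rw [hξη, hx, hy, h1, h2, hωξ] at key
  simp only [map_add, map_smul, LinearMap.add_apply, LinearMap.smul_apply, smul_eq_mul]
  have hyx := hskew y x
  linear_combination -key - α * hyx
end

section
/- Let (h, Ω) be a symplectic Lie algebra and D ∈ Der(h) such that D + α·Id is an infinitesimal symplectic transformation. Form g := ℝξ ⊕ h with [ξ,x] = Dx, and extend η, ω as usual (η(ξ)=1, η|_h=0, ω(ξ,·)=0, ω|_{h×h}=Ω). Then (g, η, ω) is an α-cosymplectic Lie algebra, i.e., dη = 0 and dω = 2α η∧ω. -/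
/-- Given a symplectic Lie algebra `(h, Ω)` and a derivation `D` such that
`D + α·Id` is an infinitesimal symplectic transformation, the extension `g := ℝξ ⊕ h`
with `⁅ξ,x⁆ = Dx`, together with the usual extensions `η`, `ω` of the data, is an
`α`-cosymplectic Lie algebra: `dη = 0` and `dω = 2α η∧ω`. -/
theorem stmt6 {h : Type*} [LieRing h] [LieAlgebra ℝ h] {n : ℕ}
    (hdim : Module.finrank ℝ h = 2 * n) (α : ℝ)
    (Ω : h →ₗ[ℝ] h →ₗ[ℝ] ℝ) (hΩalt : ∀ x, Ω x x = 0)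
    (hΩnd : ∀ x, (∀ y, Ω x y = 0) → x = 0)
    (hΩcl : ∀ x y z : h, Ω ⁅x, y⁆ z + Ω ⁅y, z⁆ x + Ω ⁅z, x⁆ y = 0)
    (D : h →ₗ[ℝ] h) (hD : ∀ x y, D ⁅x, y⁆ = ⁅D x, y⁆ + ⁅x, D y⁆)
    (hist : ∀ x y, Ω (D x + α • x) y = Ω (D y + α • y) x)
    (b : ℝ × h → ℝ × h → ℝ × h)
    (hb : ∀ p q, b p q = (0, p.1 • D q.2 - q.1 • D p.2 + ⁅p.2, q.2⁆))
    (η : ℝ × h → ℝ) (hη : ∀ p, η p = p.1)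
    (ω : ℝ × h → ℝ × h → ℝ) (hω : ∀ p q, ω p q = Ω p.2 q.2) :
    (∀ p q, η (b p q) = 0) ∧
    (∀ p q r, -ω (b p q) r - ω (b q r) p - ω (b r p) q
      = 2 * α * (η p * ω q r + η q * ω r p + η r * ω p q)) := by
  have hskew : ∀ x y, Ω x y = - Ω y x := by
    intro x y
    have := hΩalt (x + y)
    simp [map_add, hΩalt] at this
    linarith
  have hkey : ∀ x y, Ω (D x) y - Ω (D y) x = -2 * α * Ω x y := by
    intro x y
    have h1 := hist x y
    simp only [map_add, map_smul, LinearMap.add_apply, LinearMap.smul_apply,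
      smul_eq_mul] at h1
    linear_combination h1 + α * hskew x y
  refine ⟨fun p q => by simp [hb, hη], fun p q r => ?_⟩
  simp only [hb, hω, hη]
  simp only [map_add, map_sub, map_smul, LinearMap.add_apply, LinearMap.sub_apply,
    LinearMap.smul_apply, smul_eq_mul]
  linear_combination (-p.1) * hkey q.2 r.2 - q.1 * hkey r.2 p.2 - r.1 * hkey p.2 q.2
    - hΩcl p.2 q.2 r.2
end

section
/- Let (h, Ω) be a symplectic Lie algebra and suppose D ∈ Der(h) is an infinitesimal symplectic transformation (F_{Ω,D} symmetric). Then the 5-tuple construction: g := ℝξ ⊕ h with [ξ,x] = Dx, η(ξ)=1, η|_h = 0, ω extending Ω with ω(ξ,·)=0, gives a cosymplectic Lie algebra: dη = 0 and dω = 0. In particular, taking D = 0 shows every symplectic Lie algebra of dimension 2n extends to a cosymplectic Lie algebra of dimension 2n+1. -/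
/-- Let `(h, Ω)` be a symplectic Lie algebra and `D ∈ Der(h)` an
infinitesimal symplectic transformation (`F_{Ω,D}` symmetric). Then the extension
`g := ℝξ ⊕ h` with `⁅ξ,x⁆ = Dx`, `η(ξ) = 1`, `η|_h = 0`, and `ω` extending `Ω` with
`ω(ξ,·) = 0`, is a cosymplectic Lie algebra: `dη = 0` and `dω = 0` (and `(η, ω)` is
almost cosymplectic, encoded by nondegeneracy of `ω` on `ker η` with Reeb `ξ = (1,0)`).
In particular (taking `D = 0`) every symplectic Lie algebra of dimension `2n` extends
to a cosymplectic Lie algebra of dimension `2n+1`. -/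
theorem stmt19 {h : Type*} [LieRing h] [LieAlgebra ℝ h] {n : ℕ}
    (hdim : Module.finrank ℝ h = 2 * n)
    (Ω : h →ₗ[ℝ] h →ₗ[ℝ] ℝ) (hΩalt : ∀ x, Ω x x = 0)
    (hΩnd : ∀ x, (∀ y, Ω x y = 0) → x = 0)
    (hΩcl : ∀ x y z : h, Ω ⁅x, y⁆ z + Ω ⁅y, z⁆ x + Ω ⁅z, x⁆ y = 0)
    (D : h →ₗ[ℝ] h) (hD : ∀ x y, D ⁅x, y⁆ = ⁅D x, y⁆ + ⁅x, D y⁆)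
    (hist : ∀ x y, Ω (D x) y = Ω (D y) x)
    (b : ℝ × h → ℝ × h → ℝ × h)
    (hb : ∀ p q, b p q = (0, p.1 • D q.2 - q.1 • D p.2 + ⁅p.2, q.2⁆))
    (η : ℝ × h → ℝ) (hη : ∀ p, η p = p.1)
    (ω : ℝ × h → ℝ × h → ℝ) (hω : ∀ p q, ω p q = Ω p.2 q.2) :
    (∀ p q, η (b p q) = 0) ∧
    (∀ p q r, ω (b p q) r + ω (b q r) p + ω (b r p) q = 0) ∧
    η (1, 0) = 1 ∧ (∀ q, ω (1, 0) q = 0) ∧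
    (∀ p, η p = 0 → (∀ q, η q = 0 → ω p q = 0) → p = 0) := by
  refine ⟨fun p q => by simp [hη, hb], ?_, by simp [hη], fun q => by simp [hω, hb], ?_⟩
  · intro p q r
    simp only [hω, hb]
    have h1 := hΩcl p.2 q.2 r.2
    have h2 := hist p.2 q.2
    have h3 := hist q.2 r.2
    have h4 := hist r.2 p.2
    simp only [map_add, map_sub, map_smul, LinearMap.add_apply, LinearMap.sub_apply,
      LinearMap.smul_apply, smul_eq_mul]
    linear_combination h1 + p.1 * h3 + q.1 * h4 + r.1 * h2
  · intro p hp hq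
    have h1 : p.1 = 0 := by simpa [hη] using hp
    have h2 : p.2 = 0 := by
      apply hΩnd
      intro y
      have := hq (0, y) (by simp [hη])
      simpa [hω] using this
    exact Prod.ext h1 h2
end
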